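/- arXiv:2309.09862 — 2 statements merged into one kernel-verified Lean document; each statement's English description precedes it below -/
import Mathlib

section
/- Let A be a complex Banach *-algebra with identity and a ∈ A with generalized core-EP inverse a^⊕. Set p = a a^⊕. Then p is a projection, p a a^⊕ = a a^⊕, (1-p) a p = 0, p a p is invertible in the corner algebra p A p (with unit p), and (1-p) a (1-p) is quasinilpotent. -/
open Filter Topology

variable {A : Type*} [NormedRing A] [StarRing A] [NormedAlgebra ℂ A] [StarModule ℂ A]
  [CompleteSpace A]

/-- quasinilpotent: `lim ‖z^n‖^(1/n) = 0` -/
def IsQNil (z : A) : Prop :=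
  Tendsto (fun n : ℕ => ‖z ^ n‖ ^ ((1 : ℝ) / n)) atTop (𝓝 0)

/-- generalized Drazin inverse -/
def IsGD (a x : A) : Prop :=
  a * x ^ 2 = x ∧ a * x = x * a ∧ IsQNil (a - a ^ 2 * x)

/-- generalized core-EP inverse -/
def IsGCEP (a x : A) : Prop :=
  x = a * x ^ 2 ∧ star (a * x) = a * x ∧
    Tendsto (fun n : ℕ => ‖a ^ n - x * a ^ (n + 1)‖ ^ ((1 : ℝ) / n)) atTop (𝓝 0)

/-! Put `e n = aⁿ - x aⁿ⁺¹`. From `x = a x²` one gets `x = aⁿ xⁿ⁺¹`, hence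
`aᵏ x - x aᵏ⁺¹ x = e (n + k) xⁿ⁺¹` for every `n`; since `‖e n‖` decays faster than every geometric
sequence, `aᵏ x = x aᵏ⁺¹ x` for all `k`. The cases `k = 0, 1, 2` yield the algebraic claims, with
`x` itself inverting `p a p` in `p A p`. With `q = 1 - p` one has `q a q = q a` and `q x = 0`, so
`(q a q)ⁿ = q e n` for `n ≥ 1` and `q a q` inherits the root decay of `e n`. -/

section RootDecay

variable {u : ℕ → ℝ}

theorem tendsto_zero_of_tendsto_rpow_one_div (hu : ∀ n, 0 ≤ u n)
    (h : Tendsto (fun n : ℕ => u n ^ ((1 : ℝ) / n)) atTop (𝓝 0)) :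
    Tendsto u atTop (𝓝 0) := by
  refine squeeze_zero' (Eventually.of_forall hu) ?_
    (tendsto_pow_atTop_nhds_zero_of_lt_one (r := (1 / 2 : ℝ)) (by norm_num) (by norm_num))
  filter_upwards [h.eventually (ge_mem_nhds (by norm_num : (0 : ℝ) < 1 / 2)),
    eventually_ne_atTop 0] with n hroot hn
  calc u n = (u n ^ ((1 : ℝ) / n)) ^ n := by
        rw [one_div, Real.rpow_inv_natCast_pow (hu n) hn]
    _ ≤ (1 / 2) ^ n := pow_le_pow_left₀ (Real.rpow_nonneg (hu n) _) hroot n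

theorem tendsto_mul_pow_of_tendsto_rpow_one_div (hu : ∀ n, 0 ≤ u n)
    (h : Tendsto (fun n : ℕ => u n ^ ((1 : ℝ) / n)) atTop (𝓝 0)) {M : ℝ} (hM : 0 ≤ M) :
    Tendsto (fun n => u n * M ^ n) atTop (𝓝 0) := by
  refine tendsto_zero_of_tendsto_rpow_one_div (fun n => mul_nonneg (hu n) (pow_nonneg hM n)) ?_
  have hlim : Tendsto (fun n : ℕ => u n ^ ((1 : ℝ) / n) * M) atTop (𝓝 0) := by
    simpa using h.mul_const M
  refine hlim.congr' ?_
  filter_upwards [eventually_ne_atTop 0] with n hn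
  rw [Real.mul_rpow (hu n) (by positivity), one_div, Real.pow_rpow_inv_natCast hM hn]

theorem tendsto_rpow_one_div_of_le_mul (hu : ∀ n, 0 ≤ u n)
    (h : Tendsto (fun n : ℕ => u n ^ ((1 : ℝ) / n)) atTop (𝓝 0))
    {v : ℕ → ℝ} (hv : ∀ n, 0 ≤ v n) {C : ℝ} (hC : 0 < C) (hle : ∀ᶠ n in atTop, v n ≤ C * u n) :
    Tendsto (fun n : ℕ => v n ^ ((1 : ℝ) / n)) atTop (𝓝 0) := by
  have hCroot : Tendsto (fun n : ℕ => C ^ ((1 : ℝ) / n)) atTop (𝓝 1) := by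
    simpa using tendsto_const_nhds.rpow tendsto_one_div_atTop_nhds_zero_nat (Or.inl hC.ne')
  have hbound : Tendsto (fun n : ℕ => C ^ ((1 : ℝ) / n) * u n ^ ((1 : ℝ) / n)) atTop (𝓝 0) := by
    simpa using hCroot.mul h
  refine squeeze_zero' (Eventually.of_forall fun n => Real.rpow_nonneg (hv n) _) ?_ hbound
  filter_upwards [hle] with n hn
  rw [← Real.mul_rpow hC.le (hu n)]
  exact Real.rpow_le_rpow (hv n) hn (by positivity)

end RootDecay

section Ring

variable {R : Type*} [Ring R] {a x : R}

theorem pow_mul_pow_succ_of_eq_mul_sq (hx : x = a * x ^ 2) (n : ℕ) :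
    a ^ n * x ^ (n + 1) = x := by
  induction n with
  | zero => simp
  | succ n ih =>
    calc a ^ (n + 1) * x ^ (n + 1 + 1) = a ^ n * (a * x ^ 2) * x ^ n := by
          rw [pow_succ a n, add_assoc, add_comm n, pow_add]; noncomm_ring
      _ = a ^ n * x ^ (n + 1) := by rw [← hx, mul_assoc, ← pow_succ']
      _ = x := ih

theorem sub_mul_pow_succ_of_eq_mul_sq (hx : x = a * x ^ 2) (k n : ℕ) :
    (a ^ (n + k) - x * a ^ (n + k + 1)) * x ^ (n + 1) = a ^ k * x - x * a ^ (k + 1) * x := by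
  rw [add_comm n k, add_right_comm, pow_add, pow_add, sub_mul, mul_assoc, mul_assoc, mul_assoc,
    pow_mul_pow_succ_of_eq_mul_sq hx, mul_assoc]

theorem pow_succ_eq_mul_pow_succ_of_mul_mul_eq {q : R} (h : q * a * q = q * a) (n : ℕ) :
    (q * a * q) ^ (n + 1) = q * a ^ (n + 1) := by
  induction n with
  | zero => simpa using h
  | succ n ih =>
    calc (q * a * q) ^ (n + 1 + 1) = q * a * q * (q * a ^ (n + 1)) := by rw [pow_succ', ih]
      _ = q * a * q * a ^ (n + 1) := by rw [h, ← mul_assoc, h]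
      _ = q * a ^ (n + 1 + 1) := by rw [h, mul_assoc, ← pow_succ']

end Ring

theorem pow_mul_eq_mul_pow_succ_mul {R : Type*} [NormedRing R] {a x : R} (hx : x = a * x ^ 2)
    (he : Tendsto (fun n : ℕ => ‖a ^ n - x * a ^ (n + 1)‖ ^ ((1 : ℝ) / n)) atTop (𝓝 0))
    (k : ℕ) : a ^ k * x = x * a ^ (k + 1) * x := by
  set M := max ‖x‖ 1
  have hbound : ∀ n, ‖a ^ k * x - x * a ^ (k + 1) * x‖ ≤
      M * (‖a ^ (n + k) - x * a ^ (n + k + 1)‖ * M ^ (n + k)) := by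
    intro n
    rw [← sub_mul_pow_succ_of_eq_mul_sq hx k n, mul_left_comm, ← pow_succ']
    refine (norm_mul_le _ _).trans (mul_le_mul_of_nonneg_left ?_ (norm_nonneg _))
    calc ‖x ^ (n + 1)‖ ≤ ‖x‖ ^ (n + 1) := norm_pow_le' x n.succ_pos
      _ ≤ M ^ (n + 1) := pow_le_pow_left₀ (norm_nonneg x) (le_max_left _ _) _
      _ ≤ M ^ (n + k + 1) := pow_le_pow_right₀ (le_max_right _ _) (by omega)
  have hlim : Tendsto (fun n => M * (‖a ^ (n + k) - x * a ^ (n + k + 1)‖ * M ^ (n + k)))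
      atTop (𝓝 0) := by
    simpa using ((tendsto_add_atTop_iff_nat k).2 (tendsto_mul_pow_of_tendsto_rpow_one_div
      (fun n => norm_nonneg _) he (zero_le_one.trans (le_max_right ‖x‖ 1)))).const_mul M
  rw [← sub_eq_zero, ← norm_le_zero_iff]
  exact ge_of_tendsto' hlim hbound

theorem stmt10 (a x : A) (h : IsGCEP a x) :
    (a * x) * (a * x) = a * x ∧ star (a * x) = a * x ∧
      (a * x) * (a * x) = a * x ∧
      (1 - a * x) * a * (a * x) = 0 ∧
      (∃ w : A, (a * x) * w * (a * x) = w ∧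
        ((a * x) * a * (a * x)) * w = a * x ∧ w * ((a * x) * a * (a * x)) = a * x) ∧
      IsQNil ((1 - a * x) * a * (1 - a * x)) := by
  obtain ⟨hx, hsa, he⟩ := h
  have hpow := pow_mul_eq_mul_pow_succ_mul hx he
  have hxax : x * (a * x) = x := by simpa [mul_assoc] using (hpow 0).symm
  have hxa2x : x * (a * (a * x)) = a * x := by simpa [sq, mul_assoc] using (hpow 1).symm
  have ha2x : a * (a * x) = x * (a * (a * (a * x))) := by simpa [pow_succ, mul_assoc] using hpow 2
  have hpx : a * (x * x) = x := by rw [← sq, ← hx]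
  have hpp : a * x * (a * x) = a * x := by simp only [mul_assoc, hxax]
  have hqx : (1 - a * x) * x = 0 := by rw [sub_mul, one_mul, mul_assoc, hpx, sub_self]
  have hqap : (1 - a * x) * a * (a * x) = 0 := by
    rw [mul_assoc, ha2x, ← mul_assoc, hqx, zero_mul]
  refine ⟨hpp, hsa, hpp, hqap, ⟨x, ?_, ?_, ?_⟩, ?_⟩
  · simp only [mul_assoc, hxax, hpx]
  · simp only [mul_assoc, hpx, hxax]
  · simp only [mul_assoc, hxa2x]
  · have hqaq : (1 - a * x) * a * (1 - a * x) = (1 - a * x) * a := by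
      rw [mul_sub, mul_one, hqap, sub_zero]
    refine tendsto_rpow_one_div_of_le_mul (fun n => norm_nonneg _) he (fun n => norm_nonneg _)
      (C := ‖1 - a * x‖ + 1) (by positivity) ?_
    filter_upwards [eventually_ne_atTop 0] with n hn
    obtain ⟨m, rfl⟩ := Nat.exists_eq_succ_of_ne_zero hn
    calc ‖((1 - a * x) * a * (1 - a * x)) ^ (m + 1)‖
        = ‖(1 - a * x) * (a ^ (m + 1) - x * a ^ (m + 1 + 1))‖ := by
          rw [pow_succ_eq_mul_pow_succ_of_mul_mul_eq hqaq, mul_sub, ← mul_assoc, hqx, zero_mul,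
            sub_zero]
      _ ≤ (‖1 - a * x‖ + 1) * ‖a ^ (m + 1) - x * a ^ (m + 1 + 1)‖ :=
          (norm_mul_le _ _).trans (by gcongr; linarith)
end

section
/- Let A be a complex Banach *-algebra with identity, let a, b ∈ A have generalized core-EP inverses with a ≤^⊕ b (a a^⊕ = b a^⊕ and a^⊕ a = a^⊕ b), and let p = a a^⊕. Then the corner element (1-p) b (1-p) has a generalized core-EP inverse in the Banach *-algebra (1-p) A (1-p) (with unit 1-p). -/
open Filter Topology

variable {A : Type*} [NormedRing A] [StarRing A] [NormedAlgebra ℂ A] [StarModule ℂ A]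
  [CompleteSpace A]

/-!
Write `p = a a^⊕`. The growth condition in the definition of a generalized core-EP inverse `y`
of `b` forces `y b² z = b z` whenever `b z² = z`: the difference equals
`(bⁿ - y bⁿ⁺¹) zⁿ`, whose norm has `n`-th root tending to `0`. Applied to `(a, a^⊕, a^⊕)` and,
thanks to `a a^⊕ = b a^⊕`, to `(b, b^⊕, a^⊕)`, this shows that `p` is a projection whose range
is invariant under `b` and `b^⊕`, and that `b b^⊕ p = p`. Compressing `b` and `b^⊕` to the
corner `1 - p` then preserves all three defining conditions, the product of the compressions
being the projection `b b^⊕ - p`.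
-/

lemma tendsto_rpow_one_div_natCast {c : ℝ} (hc : 0 < c) :
    Tendsto (fun n : ℕ => c ^ ((1 : ℝ) / n)) atTop (𝓝 1) := by
  simpa using tendsto_const_nhds.rpow tendsto_one_div_atTop_nhds_zero_nat (Or.inl hc.ne')

lemma tendsto_rpow_one_div_of_le_const_mul {f g : ℕ → ℝ} {K : ℝ} (hf : ∀ n, 0 ≤ f n)
    (hg : ∀ n, 0 ≤ g n) (hfg : ∀ᶠ n in atTop, f n ≤ K * g n)
    (hg_lim : Tendsto (fun n : ℕ => g n ^ ((1 : ℝ) / n)) atTop (𝓝 0)) :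
    Tendsto (fun n : ℕ => f n ^ ((1 : ℝ) / n)) atTop (𝓝 0) := by
  set K' := max K 1
  have hK' : 0 < K' := zero_lt_one.trans_le (le_max_right K 1)
  have hbound : Tendsto (fun n : ℕ => K' ^ ((1 : ℝ) / n) * g n ^ ((1 : ℝ) / n)) atTop (𝓝 0) := by
    simpa using (tendsto_rpow_one_div_natCast hK').mul hg_lim
  refine squeeze_zero' (Eventually.of_forall fun n => Real.rpow_nonneg (hf n) _) ?_ hbound
  filter_upwards [hfg] with n hn
  rw [← Real.mul_rpow hK'.le (hg n)]
  exact Real.rpow_le_rpow (hf n)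
    (hn.trans (mul_le_mul_of_nonneg_right (le_max_left K 1) (hg n))) (by positivity)

lemma eq_zero_of_le_mul_pow {c r : ℝ} {Z : ℕ → ℝ} (hc : 0 ≤ c) (hr : 0 ≤ r) (hZ : ∀ n, 0 ≤ Z n)
    (hZ_lim : Tendsto (fun n : ℕ => Z n ^ ((1 : ℝ) / n)) atTop (𝓝 0))
    (h : ∀ᶠ n in atTop, c ≤ Z n * r ^ n) : c = 0 := by
  by_contra hne
  have hupper : Tendsto (fun n : ℕ => Z n ^ ((1 : ℝ) / n) * r) atTop (𝓝 0) := by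
    simpa using hZ_lim.mul_const r
  have hle : ∀ᶠ n : ℕ in atTop, c ^ ((1 : ℝ) / n) ≤ Z n ^ ((1 : ℝ) / n) * r := by
    filter_upwards [h, eventually_ne_atTop 0] with n hn hn0
    calc c ^ ((1 : ℝ) / n) ≤ (Z n * r ^ n) ^ ((1 : ℝ) / n) :=
          Real.rpow_le_rpow hc hn (by positivity)
      _ = Z n ^ ((1 : ℝ) / n) * r := by
          rw [Real.mul_rpow (hZ n) (pow_nonneg hr n), one_div,
            Real.pow_rpow_inv_natCast hr hn0]
  have := le_of_tendsto_of_tendsto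
    (tendsto_rpow_one_div_natCast (lt_of_le_of_ne hc (Ne.symm hne))) hupper hle
  linarith

lemma one_sub_mul_mul_one_sub_eq {R : Type*} [Ring R] {p x : R} (h : (1 - p) * x * p = 0) :
    (1 - p) * x * (1 - p) = (1 - p) * x := by
  rw [mul_sub, mul_one, h, sub_zero]

lemma pow_succ_mul_pow_succ_of_mul_sq_eq {M : Type*} [Monoid M] {b z : M} (hz : b * z ^ 2 = z)
    (n : ℕ) : b ^ (n + 1) * z ^ (n + 1) = b * z := by
  induction n with
  | zero => rw [pow_one, pow_one]
  | succ n ih =>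
    rw [pow_succ b (n + 1), mul_assoc, show n + 1 + 1 = 2 + n by omega, pow_add z 2 n,
      ← mul_assoc b, hz, ← pow_succ', ih]

namespace IsGCEP

variable {R : Type*} [NormedRing R] [StarRing R] {b y z : R}

theorem mul_sq_mul_eq (hy : IsGCEP b y) (hz : b * z ^ 2 = z) : y * b ^ 2 * z = b * z := by
  have hdiff : ∀ n,
      (b ^ (n + 1) - y * b ^ (n + 1 + 1)) * z ^ (n + 1) = b * z - y * b ^ 2 * z := by
    intro n
    rw [sub_mul, pow_succ' b (n + 1), mul_assoc, mul_assoc b,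
      pow_succ_mul_pow_succ_of_mul_sq_eq hz]
    simp only [sq, mul_assoc]
  have hbound : ∀ᶠ n in atTop, ‖b * z - y * b ^ 2 * z‖ ≤ ‖b ^ n - y * b ^ (n + 1)‖ * ‖z‖ ^ n := by
    refine eventually_atTop.2 ⟨1, fun n hn => ?_⟩
    obtain ⟨m, rfl⟩ := Nat.exists_eq_add_of_le' hn
    rw [← hdiff]
    exact (norm_mul_le _ _).trans
      (mul_le_mul_of_nonneg_left (norm_pow_le' z m.succ_pos) (norm_nonneg _))
  have h0 := eq_zero_of_le_mul_pow (norm_nonneg _) (norm_nonneg z) (fun n => norm_nonneg _)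
    hy.2.2 hbound
  rw [norm_eq_zero, sub_eq_zero] at h0
  exact h0.symm

theorem mul_mul_eq (hy : IsGCEP b y) (hz : b * z ^ 2 = z) : y * (b * z) = z :=
  calc y * (b * z) = y * (b * (b * z ^ 2)) := by rw [hz]
    _ = y * b ^ 2 * z * z := by simp only [sq, mul_assoc]
    _ = z := by rw [hy.mul_sq_mul_eq hz, mul_assoc, ← sq, hz]

theorem isStarProjection_mul (hy : IsGCEP b y) : IsStarProjection (b * y) where
  isIdempotentElem := by
    show b * y * (b * y) = b * y
    rw [mul_assoc, hy.mul_mul_eq hy.1.symm]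
  isSelfAdjoint := hy.2.1

theorem one_sub_mul_mul_one_sub {p : R} (hy : IsGCEP b y) (hp : IsStarProjection p)
    (hbp : (1 - p) * b * p = 0) (hyp : (1 - p) * y * p = 0) (hqp : b * y * p = p) :
    IsGCEP ((1 - p) * b * (1 - p)) ((1 - p) * y * (1 - p)) := by
  set e := 1 - p with he_def
  have he : IsIdempotentElem e := hp.one_sub.isIdempotentElem
  have hq := hy.isStarProjection_mul
  have hc : e * b * e = e * b := one_sub_mul_mul_one_sub_eq hbp
  have hw : e * y * e = e * y := one_sub_mul_mul_one_sub_eq hyp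
  have hpq : p * (b * y) = p := by
    simpa [hp.isSelfAdjoint.star_eq, hq.isSelfAdjoint.star_eq] using congr(star $hqp)
  have hcw : e * b * e * (e * y * e) = b * y - p := by
    rw [hc, hw, ← mul_assoc, hc, mul_assoc, he_def, sub_mul, one_mul, hpq]
  have hpow : ∀ n, (e * b * e) ^ (n + 1) = e * (b ^ (n + 1)) := by
    intro n
    induction n with
    | zero => rw [pow_one, pow_one, hc]
    | succ n ih =>
      rw [pow_succ' _ (n + 1), ih, ← mul_assoc, he.mul_mul_self, hc, mul_assoc, ← pow_succ']
  have hqpe : (b * y - p) * e = b * y - p := by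
    rw [he_def, mul_sub, mul_one, sub_mul, hqp, hp.isIdempotentElem.eq, sub_self, sub_zero]
  refine ⟨?_, ?_, ?_⟩
  · calc e * y * e = e * y := hw
      _ = (b * y - p) * y := by
          rw [he_def, sub_mul, sub_mul, one_mul, mul_assoc, ← sq, ← hy.1]
      _ = (b * y - p) * e * y := by rw [hqpe]
      _ = e * b * e * (e * y * e) ^ 2 := by rw [sq, ← mul_assoc, hcw, hw, mul_assoc]
  · rw [hcw]
    exact (hp.sub_of_mul_eq_right hq hqp).isSelfAdjoint.star_eq
  · refine tendsto_rpow_one_div_of_le_const_mul (K := ‖e‖) (fun n => norm_nonneg _)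
      (fun n => norm_nonneg _) (eventually_atTop.2 ⟨1, fun n hn => ?_⟩) hy.2.2
    obtain ⟨m, rfl⟩ := Nat.exists_eq_add_of_le' hn
    have hdiff : (e * b * e) ^ (m + 1) - e * y * e * (e * b * e) ^ (m + 1 + 1) =
        e * (b ^ (m + 1) - y * b ^ (m + 1 + 1)) := by
      rw [hpow, hpow, ← mul_assoc (e * y * e), he.mul_mul_self, hw, mul_sub, mul_assoc]
    rw [hdiff]
    exact norm_mul_le _ _

end IsGCEP

theorem stmt12_general (a b ag bg : A) (ha : IsGCEP a ag) (hb : IsGCEP b bg)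
    (h1 : a * ag = b * ag) :
    ∃ w : A, (1 - a * ag) * w * (1 - a * ag) = w ∧
      IsGCEP ((1 - a * ag) * b * (1 - a * ag)) w := by
  set p := a * ag
  have hp : IsStarProjection p := ha.isStarProjection_mul
  have hpag : p * ag = ag := by rw [mul_assoc, ← sq, ← ha.1]
  have hbag : b * ag ^ 2 = ag := by rw [sq, ← mul_assoc, ← h1, hpag]
  have hbgp : bg * p = ag := by rw [h1, hb.mul_mul_eq hbag]
  have hbp : b * p = p * (a * p) :=
    calc b * p = b * (ag * a ^ 2 * ag) := by rw [ha.mul_sq_mul_eq ha.1.symm]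
      _ = b * ag * (a * (a * ag)) := by simp only [sq, mul_assoc]
      _ = p * (a * p) := by rw [← h1]
  have he : IsIdempotentElem (1 - p) := hp.one_sub.isIdempotentElem
  refine ⟨(1 - p) * bg * (1 - p), ?_, hb.one_sub_mul_mul_one_sub hp ?_ ?_ ?_⟩
  · simp only [mul_assoc, he.eq, he.mul_self_mul]
  · rw [mul_assoc, hbp, ← mul_assoc, hp.one_sub_mul_self, zero_mul]
  · rw [mul_assoc, hbgp, sub_mul, one_mul, hpag, sub_self]
  · rw [mul_assoc, hbgp, ← h1]

theorem stmt12 (a b ag bg : A) (ha : IsGCEP a ag) (hb : IsGCEP b bg)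
    (h1 : a * ag = b * ag) (h2 : ag * a = ag * b) :
    ∃ w : A, (1 - a * ag) * w * (1 - a * ag) = w ∧
      IsGCEP ((1 - a * ag) * b * (1 - a * ag)) w :=
  stmt12_general a b ag bg ha hb h1
end
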